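/- arXiv:2309.10998 — 7 statements merged into one kernel-verified Lean document; each statement's English description precedes it below -/
import Mathlib

section
/- Let θ* = θ*(α,γ) ∈ (0, π/2) be the unique solution of γ/α = 4θ tan θ, and define the fixation rate κ = 4αθ*². Then as the ratio γ/α → 0 (with, say, γ fixed), κ = γ·(1 - γ/(12α) + O(γ²/α²)); in particular κ/γ → 1 and (1 - κ/γ)·(12α/γ) → 1. -/
open Filter Real Set Topology

/-! With `t = θ α` the defining equation reads `γ = 4 α t tan t`, so `κ/γ = t / tan t` and
`(1 - κ/γ)·(12α/γ) = 3 · (tan t - t)/t³ · (t / tan t)²`. Since `t² < t tan t = γ/(4α)`, `t → 0⁺`,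
and both limits follow from `tan t / t → 1` and `(tan t - t)/t³ → 1/3` (L'Hôpital). -/

lemma tendsto_tan_div_self_nhdsNE : Tendsto (fun t => tan t / t) (𝓝[≠] 0) (𝓝 1) := by
  have h : HasDerivAt tan 1 0 := by simpa using hasDerivAt_tan (x := 0) (by simp)
  refine (hasDerivAt_iff_tendsto_slope.mp h).congr fun t => ?_
  simp [slope_def_field]

lemma tendsto_self_div_tan_nhdsNE : Tendsto (fun t => t / tan t) (𝓝[≠] 0) (𝓝 1) := by
  simpa using tendsto_tan_div_self_nhdsNE.inv₀ one_ne_zero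

lemma hasDerivAt_tan_sub_id {t : ℝ} (ht : cos t ≠ 0) :
    HasDerivAt (fun t => tan t - t) (tan t ^ 2) t := by
  have h := (hasDerivAt_tan ht).sub (hasDerivAt_id t)
  rwa [one_div, ← inv_one_add_tan_sq ht, inv_inv, add_sub_cancel_left] at h

lemma tendsto_tan_sub_self_div_pow_three_nhdsNE :
    Tendsto (fun t => (tan t - t) / t ^ 3) (𝓝[≠] 0) (𝓝 (1 / 3)) := by
  have hcos : ∀ᶠ t in 𝓝[≠] (0 : ℝ), cos t ≠ 0 :=
    nhdsWithin_le_nhds <| continuous_cos.continuousAt.eventually_ne (by simp)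
  have hdiv : Tendsto (fun t => tan t ^ 2 / (3 * t ^ 2)) (𝓝[≠] 0) (𝓝 (1 / 3)) := by
    have h := (tendsto_tan_div_self_nhdsNE.pow 2).div_const 3
    rw [one_pow] at h
    refine h.congr fun t => ?_
    rw [div_pow, div_div, mul_comm]
  refine HasDerivAt.lhopital_zero_nhdsNE (hcos.mono fun t => hasDerivAt_tan_sub_id)
    (Eventually.of_forall fun t => by simpa using hasDerivAt_pow 3 t)
    (eventually_mem_nhdsWithin.mono fun t (ht : t ≠ 0) => by positivity) ?_ ?_ hdiv
  · have : ContinuousAt (fun t => tan t - t) 0 :=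
      (continuousAt_tan.mpr (by simp)).sub continuousAt_id
    simpa using this.tendsto.mono_left nhdsWithin_le_nhds
  · simpa using ((continuous_pow 3).tendsto (0 : ℝ)).mono_left nhdsWithin_le_nhds

lemma sq_lt_mul_tan {t : ℝ} (h0 : 0 < t) (h1 : t < π / 2) : t ^ 2 < t * tan t := by
  rw [sq]
  exact mul_lt_mul_of_pos_left (lt_tan h0 h1) h0

lemma tendsto_nhdsGT_zero_of_mul_tan {ι : Type*} {l : Filter ι} {θ : ι → ℝ}
    (hmem : ∀ᶠ i in l, θ i ∈ Ioo 0 (π / 2)) (h : Tendsto (fun i => θ i * tan (θ i)) l (𝓝 0)) :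
    Tendsto θ l (𝓝[>] 0) := by
  have hsq : Tendsto (fun i => θ i ^ 2) l (𝓝 0) :=
    squeeze_zero' (Eventually.of_forall fun i => sq_nonneg _)
      (hmem.mono fun i hi => (sq_lt_mul_tan hi.1 hi.2).le) h
  refine tendsto_nhdsWithin_iff.mpr ⟨?_, hmem.mono fun i hi => hi.1⟩
  have hsqrt := (continuous_sqrt.tendsto 0).comp hsq
  rw [sqrt_zero] at hsqrt
  exact hsqrt.congr' (hmem.mono fun i hi => sqrt_sq hi.1.le)

lemma fixation_ratio_eq {α t : ℝ} (hα : α ≠ 0) (ht : t ≠ 0) (htan : tan t ≠ 0) :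
    4 * α * t ^ 2 / (4 * α * t * tan t) = t / tan t := by
  field_simp

lemma fixation_correction_eq {α t : ℝ} (hα : α ≠ 0) (ht : t ≠ 0) (htan : tan t ≠ 0) :
    (1 - 4 * α * t ^ 2 / (4 * α * t * tan t)) * (12 * α / (4 * α * t * tan t)) =
      3 * ((tan t - t) / t ^ 3) * (t / tan t) ^ 2 := by
  field_simp
  ring

theorem stmt_1_general (γ : ℝ) (θ : ℝ → ℝ)
    (hθmem : ∀ α : ℝ, 0 < α → θ α ∈ Set.Ioo 0 (Real.pi / 2))
    (hθeq : ∀ α : ℝ, 0 < α → γ / α = 4 * θ α * Real.tan (θ α)) :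
    Tendsto (fun α : ℝ => 4 * α * (θ α) ^ 2 / γ) atTop (nhds 1) ∧
    Tendsto (fun α : ℝ => (1 - 4 * α * (θ α) ^ 2 / γ) * (12 * α / γ)) atTop (nhds 1) := by
  have hsol : ∀ᶠ α in atTop, α ≠ 0 ∧ θ α ∈ Ioo 0 (π / 2) ∧ γ = 4 * α * θ α * tan (θ α) :=
    (eventually_gt_atTop 0).mono fun α hα => ⟨hα.ne', hθmem α hα, by
      linear_combination (div_eq_iff hα.ne').mp (hθeq α hα)⟩
  have hθ : Tendsto θ atTop (𝓝[≠] 0) := by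
    refine (tendsto_nhdsGT_zero_of_mul_tan (hsol.mono fun α h => h.2.1) ?_).mono_right
      (nhdsWithin_mono _ fun t ht => ne_of_gt ht)
    refine (tendsto_const_nhds.div_atTop tendsto_id : Tendsto (fun α : ℝ => γ / 4 / α) _ _).congr'
      (hsol.mono fun α ⟨hα, _, hγα⟩ => ?_)
    rw [hγα]
    field_simp
  have hratio := tendsto_self_div_tan_nhdsNE.comp hθ
  have hcubic := (tendsto_tan_sub_self_div_pow_three_nhdsNE.comp hθ).const_mul 3
  have hcorr := hcubic.mul (hratio.pow 2)
  rw [mul_one_div_cancel three_ne_zero, one_pow, one_mul] at hcorr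
  refine ⟨hratio.congr' ?_, hcorr.congr' ?_⟩
  all_goals
    filter_upwards [hsol] with α ⟨hα, ⟨hθ0, hθπ⟩, hγα⟩
    rw [hγα]
  · exact (fixation_ratio_eq hα hθ0.ne' (tan_pos_of_pos_of_lt_pi_div_two hθ0 hθπ).ne').symm
  · exact (fixation_correction_eq hα hθ0.ne'
      (tan_pos_of_pos_of_lt_pi_div_two hθ0 hθπ).ne').symm

/-- Fast-migration asymptotics of the fixation rate `κ = 4 α θ*(α)²`, where
`θ*(α) ∈ (0, π/2)` is the unique solution of `γ/α = 4 θ tan θ`.  As `γ/α → 0`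
(with `γ` fixed, i.e. `α → ∞`), `κ = γ (1 - γ/(12α) + O(γ²/α²))`; in
particular `κ/γ → 1` and `(1 - κ/γ)·(12α/γ) → 1`. -/
theorem stmt_1 (γ : ℝ) (hγ : 0 < γ) (θ : ℝ → ℝ)
    (hθmem : ∀ α : ℝ, 0 < α → θ α ∈ Set.Ioo 0 (Real.pi / 2))
    (hθeq : ∀ α : ℝ, 0 < α → γ / α = 4 * θ α * Real.tan (θ α)) :
    Tendsto (fun α : ℝ => 4 * α * (θ α) ^ 2 / γ) atTop (nhds 1) ∧
    Tendsto (fun α : ℝ => (1 - 4 * α * (θ α) ^ 2 / γ) * (12 * α / γ)) atTop (nhds 1) :=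
  stmt_1_general γ θ hθmem hθeq
end

section
/- Let θ* = θ*(α,γ) ∈ (0, π/2) be the unique solution of γ/α = 4θ tan θ, and define κ = 4αθ*². Then as α/γ → 0 (with γ fixed), κ = π²α·(1 - 8α/γ + O(α²/γ²)); in particular θ* → π/2 and κ/(π²α) → 1. -/
open Filter

lemma aux_div_sin : Tendsto (fun u : ℝ => u / Real.sin u) (nhdsWithin 0 (Set.Ioi 0)) (nhds 1) := by
  have h : HasDerivAt Real.sin 1 0 := by simpa using Real.hasDerivAt_sin 0
  rw [hasDerivAt_iff_tendsto_slope] at h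
  have h2 : Tendsto (fun u : ℝ => Real.sin u / u) (nhdsWithin 0 {(0:ℝ)}ᶜ) (nhds 1) := by
    refine h.congr' ?_
    filter_upwards [self_mem_nhdsWithin] with y hy
    simp [slope_fun_def]
    ring
  have h3 := h2.inv₀ one_ne_zero
  simp only [inv_one] at h3
  have h4 : Tendsto (fun u : ℝ => (Real.sin u / u)⁻¹) (nhdsWithin 0 (Set.Ioi 0)) (nhds 1) :=
    h3.mono_left (nhdsWithin_mono _ (fun x hx => ne_of_gt hx))
  exact h4.congr (fun u => by rw [inv_div])

/-- Slow-migration asymptotics of the fixation rate `κ = 4 α θ*(α)²`, where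
`θ*(α) ∈ (0, π/2)` is the unique solution of `γ/α = 4 θ tan θ`.  As `α/γ → 0`
(with `γ` fixed, i.e. `α → 0⁺`), `κ = π² α (1 - 8α/γ + O(α²/γ²))`; in
particular `θ* → π/2` and `κ/(π²α) → 1`. -/
theorem stmt_2 (γ : ℝ) (hγ : 0 < γ) (θ : ℝ → ℝ)
    (hθmem : ∀ α : ℝ, 0 < α → θ α ∈ Set.Ioo 0 (Real.pi / 2))
    (hθeq : ∀ α : ℝ, 0 < α → γ / α = 4 * θ α * Real.tan (θ α)) :
    Tendsto θ (nhdsWithin 0 (Set.Ioi 0)) (nhds (Real.pi / 2)) ∧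
    Tendsto (fun α : ℝ => 4 * α * (θ α) ^ 2 / (Real.pi ^ 2 * α))
      (nhdsWithin 0 (Set.Ioi 0)) (nhds 1) ∧
    Tendsto (fun α : ℝ => (1 - 4 * α * (θ α) ^ 2 / (Real.pi ^ 2 * α)) * (γ / (8 * α)))
      (nhdsWithin 0 (Set.Ioi 0)) (nhds 1) := by
  have hpi := Real.pi_pos
  have hpi' : Real.pi ≠ 0 := ne_of_gt hpi
  -- tan (θ α) is positive
  have htanpos : ∀ α : ℝ, 0 < α → 0 < Real.tan (θ α) := fun α hα =>
    Real.tan_pos_of_pos_of_lt_pi_div_two (hθmem α hα).1 (hθmem α hα).2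
  -- tan (θ α) → ∞
  have hT : Tendsto (fun α => Real.tan (θ α)) (nhdsWithin 0 (Set.Ioi 0)) atTop := by
    have hlow : Tendsto (fun α : ℝ => γ / (2 * Real.pi) * α⁻¹) (nhdsWithin 0 (Set.Ioi 0)) atTop :=
      tendsto_inv_nhdsGT_zero.const_mul_atTop (by positivity)
    refine tendsto_atTop_mono' _ ?_ hlow
    filter_upwards [self_mem_nhdsWithin] with α hα
    have hα : (0:ℝ) < α := hα
    have h1 := hθeq α hα
    have h2 := hθmem α hα
    have ht := htanpos α hα
    have key : γ / α ≤ 2 * Real.pi * Real.tan (θ α) := by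
      rw [h1]; nlinarith [h2.1, h2.2, ht]
    have : γ / (2 * Real.pi) * α⁻¹ = (γ / α) / (2 * Real.pi) := by
      ring
    rw [this, div_le_iff₀ (by positivity)]
    calc γ / α ≤ 2 * Real.pi * Real.tan (θ α) := key
    _ = Real.tan (θ α) * (2 * Real.pi) := by ring
  -- θ → π/2
  have hθlim : Tendsto θ (nhdsWithin 0 (Set.Ioi 0)) (nhds (Real.pi / 2)) := by
    have harc := (Real.tendsto_arctan_atTop.mono_right nhdsWithin_le_nhds).comp hT
    refine harc.congr' ?_
    filter_upwards [self_mem_nhdsWithin] with α hα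
    have h2 := hθmem α (hα : (0:ℝ) < α)
    exact Real.arctan_tan (by linarith [h2.1]) h2.2
  refine ⟨hθlim, ?_, ?_⟩
  · -- second limit
    have hc : Tendsto (fun x : ℝ => 4 * x ^ 2 / Real.pi ^ 2) (nhds (Real.pi / 2)) (nhds 1) := by
      have := (Continuous.tendsto (by continuity : Continuous fun x : ℝ => 4 * x ^ 2 / Real.pi ^ 2)
        (Real.pi / 2))
      have hval : 4 * (Real.pi / 2) ^ 2 / Real.pi ^ 2 = 1 := by field_simp; ring
      rwa [hval] at this
    refine (hc.comp hθlim).congr' ?_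
    filter_upwards [self_mem_nhdsWithin] with α hα
    have hα : (0:ℝ) < α := hα
    show 4 * (θ α) ^ 2 / Real.pi ^ 2 = 4 * α * (θ α) ^ 2 / (Real.pi ^ 2 * α)
    field_simp
  · -- third limit
    set g : ℝ → ℝ := fun t =>
      ((Real.pi / 2 - t) / Real.sin (Real.pi / 2 - t)) *
        (4 / Real.pi ^ 2 * (Real.pi / 2 + t) * t * Real.sin t / 2) with hg_def
    have hθ' : Tendsto θ (nhdsWithin 0 (Set.Ioi 0))
        (nhdsWithin (Real.pi / 2) (Set.Ioo 0 (Real.pi / 2))) := by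
      rw [tendsto_nhdsWithin_iff]
      refine ⟨hθlim, ?_⟩
      filter_upwards [self_mem_nhdsWithin] with α hα using hθmem α hα
    have hmap : Tendsto (fun t : ℝ => Real.pi / 2 - t)
        (nhdsWithin (Real.pi / 2) (Set.Ioo 0 (Real.pi / 2))) (nhdsWithin 0 (Set.Ioi 0)) := by
      rw [tendsto_nhdsWithin_iff]
      constructor
      · have : Tendsto (fun t : ℝ => Real.pi / 2 - t) (nhds (Real.pi / 2))
            (nhds (Real.pi / 2 - Real.pi / 2)) :=
          (tendsto_const_nhds.sub tendsto_id)
        simpa using this.mono_left nhdsWithin_le_nhds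
      · filter_upwards [self_mem_nhdsWithin] with t ht
        exact Set.mem_Ioi.2 (by linarith [ht.2])
    have hfac1 := aux_div_sin.comp hmap
    have hfac2 : Tendsto (fun t : ℝ => 4 / Real.pi ^ 2 * (Real.pi / 2 + t) * t * Real.sin t / 2)
        (nhdsWithin (Real.pi / 2) (Set.Ioo 0 (Real.pi / 2))) (nhds 1) := by
      have hcont : Continuous fun t : ℝ =>
          4 / Real.pi ^ 2 * (Real.pi / 2 + t) * t * Real.sin t / 2 := by continuity
      have := (hcont.tendsto (Real.pi / 2)).mono_left
        (nhdsWithin_le_nhds (s := Set.Ioo 0 (Real.pi / 2)))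
      have hval : 4 / Real.pi ^ 2 * (Real.pi / 2 + Real.pi / 2) * (Real.pi / 2) *
          Real.sin (Real.pi / 2) / 2 = 1 := by
        rw [Real.sin_pi_div_two]; field_simp; ring
      rwa [hval] at this
    have hg : Tendsto g (nhdsWithin (Real.pi / 2) (Set.Ioo 0 (Real.pi / 2))) (nhds 1) := by
      have := hfac1.mul hfac2
      rwa [one_mul] at this
    refine (hg.comp hθ').congr' ?_
    filter_upwards [self_mem_nhdsWithin] with α hα
    have hα : (0:ℝ) < α := hα
    have h2 := hθmem α hα
    have hcos : 0 < Real.cos (θ α) := Real.cos_pos_of_mem_Ioo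
      ⟨by linarith [h2.1], h2.2⟩
    have hγα : γ = 4 * θ α * Real.tan (θ α) * α := by
      have := hθeq α hα
      field_simp at this ⊢
      linarith [this]
    show g (θ α) = (1 - 4 * α * (θ α) ^ 2 / (Real.pi ^ 2 * α)) * (γ / (8 * α))
    rw [hg_def]
    simp only
    rw [Real.sin_pi_div_two_sub, hγα, Real.tan_eq_sin_div_cos]
    field_simp
    ring
end

section
/- For fixed γ > 0, the fixation rate κ(α) = 4α·θ*(α)², where θ*(α) ∈ (0,π/2) solves γ/α = 4θ tan θ, is a strictly increasing function of α ∈ (0,∞), tends to 0 as α → 0, and tends to γ as α → ∞. -/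
open Filter Real Set

lemma aux_cos_ne {x : ℝ} (hx : x ∈ Set.Ioo 0 (Real.pi / 2)) : Real.cos x ≠ 0 := by
  have := Real.cos_pos_of_mem_Ioo (show x ∈ Set.Ioo (-(Real.pi/2)) (Real.pi/2) from
    ⟨by linarith [hx.1, Real.pi_pos], hx.2⟩)
  linarith

lemma aux_tan_pos {x : ℝ} (hx : x ∈ Set.Ioo 0 (Real.pi / 2)) : 0 < Real.tan x :=
  Real.tan_pos_of_pos_of_lt_pi_div_two hx.1 hx.2

/-- `tan x / x` is strictly increasing on `(0, π/2)`. -/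
lemma aux_tan_div_mono : StrictMonoOn (fun x => Real.tan x / x) (Set.Ioo 0 (Real.pi / 2)) := by
  have hconv : Convex ℝ (Set.Ioo (0:ℝ) (Real.pi / 2)) := convex_Ioo _ _
  have hderiv : ∀ x ∈ Set.Ioo (0:ℝ) (Real.pi / 2),
      HasDerivAt (fun x => Real.tan x / x)
        ((1 / Real.cos x ^ 2 * x - Real.tan x * 1) / x ^ 2) x := by
    intro x hx
    exact (Real.hasDerivAt_tan (aux_cos_ne hx)).div (hasDerivAt_id x) (ne_of_gt hx.1)
  apply strictMonoOn_of_deriv_pos hconv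
  · intro x hx
    exact (hderiv x hx).continuousAt.continuousWithinAt
  · intro x hx
    rw [interior_Ioo] at hx
    rw [(hderiv x hx).deriv]
    have hcos := Real.cos_pos_of_mem_Ioo (show x ∈ Set.Ioo (-(Real.pi/2)) (Real.pi/2) from
      ⟨by linarith [hx.1, Real.pi_pos], hx.2⟩)
    have hsin : 0 < Real.sin x := Real.sin_pos_of_pos_of_lt_pi hx.1 (by linarith [Real.pi_pos, hx.2])
    have hsinlt : Real.sin x < x := Real.sin_lt hx.1
    have hcle : Real.cos x ≤ 1 := Real.cos_le_one x
    have hnum : 0 < 1 / Real.cos x ^ 2 * x - Real.tan x * 1 := by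
      rw [Real.tan_eq_sin_div_cos]
      have : Real.sin x * Real.cos x < x := by nlinarith
      have h2 : Real.sin x / Real.cos x < x / Real.cos x ^ 2 := by
        rw [div_lt_div_iff₀ hcos (by positivity)]
        nlinarith
      have : 1 / Real.cos x ^ 2 * x = x / Real.cos x ^ 2 := by ring
      rw [this]
      linarith
    exact div_pos hnum (pow_pos hx.1 2)

/-- For fixed `γ > 0`, the fixation rate `κ(α) = 4 α θ*(α)²`, where `θ*(α) ∈ (0, π/2)`
solves `γ/α = 4 θ tan θ`, is strictly increasing in `α ∈ (0, ∞)`, tends to `0` as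
`α → 0⁺`, and tends to `γ` as `α → ∞`. -/
theorem stmt_3 (γ : ℝ) (hγ : 0 < γ) (θ : ℝ → ℝ)
    (hθmem : ∀ α : ℝ, 0 < α → θ α ∈ Set.Ioo 0 (Real.pi / 2))
    (hθeq : ∀ α : ℝ, 0 < α → γ / α = 4 * θ α * Real.tan (θ α)) :
    StrictMonoOn (fun α : ℝ => 4 * α * (θ α) ^ 2) (Set.Ioi 0) ∧
    Tendsto (fun α : ℝ => 4 * α * (θ α) ^ 2) (nhdsWithin 0 (Set.Ioi 0)) (nhds 0) ∧
    Tendsto (fun α : ℝ => 4 * α * (θ α) ^ 2) atTop (nhds γ) := by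
  have pi2pos : 0 < Real.pi / 2 := by linarith [Real.pi_pos]
  -- κ α = γ * (θ α / tan (θ α))
  have key : ∀ α : ℝ, 0 < α → 4 * α * (θ α) ^ 2 = γ * (θ α / Real.tan (θ α)) := by
    intro α hα
    have hmem := hθmem α hα
    have htan := aux_tan_pos hmem
    have heq := hθeq α hα
    have hγeq : γ = α * (4 * θ α * Real.tan (θ α)) := by
      field_simp at heq
      linarith
    rw [hγeq]
    field_simp
  -- θ is strictly antitone
  have hanti : ∀ a b : ℝ, 0 < a → a < b → θ b < θ a := by
    intro a b ha hab
    have hb : 0 < b := lt_trans ha hab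
    have hma := hθmem a ha
    have hmb := hθmem b hb
    have hlt : γ / b < γ / a := by
      apply div_lt_div_of_pos_left hγ ha hab
    rw [hθeq a ha, hθeq b hb] at hlt
    by_contra hc
    push_neg at hc
    rcases eq_or_lt_of_le hc with h | h
    · rw [h] at hlt; linarith
    · have ht : Real.tan (θ a) < Real.tan (θ b) :=
        Real.tan_lt_tan_of_nonneg_of_lt_pi_div_two (le_of_lt hma.1) hmb.2 h
      have hta := aux_tan_pos hma
      nlinarith [hma.1]
  -- strict monotonicity
  refine ⟨?_, ?_, ?_⟩
  · intro a ha b hb hab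
    simp only [Set.mem_Ioi] at ha hb
    have hma := hθmem a ha
    have hmb := hθmem b hb
    have hlt := hanti a b ha hab
    have hf := aux_tan_div_mono hmb hma hlt
    simp only
    rw [key a ha, key b hb]
    have hta := aux_tan_pos hma
    have htb := aux_tan_pos hmb
    apply mul_lt_mul_of_pos_left _ hγ
    rw [div_lt_div_iff₀ hta htb]
    rw [div_lt_div_iff₀ hmb.1 hma.1] at hf
    linarith
  -- limit at 0⁺
  · have hto : Tendsto θ (nhdsWithin 0 (Set.Ioi 0)) (nhds (Real.pi / 2)) := by
      rw [tendsto_order]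
      constructor
      · intro b hblt
        rcases le_or_gt b 0 with hb0 | hb0
        · filter_upwards [self_mem_nhdsWithin] with α hα
          exact lt_of_le_of_lt hb0 (hθmem α hα).1
        · have hbmem : b ∈ Set.Ioo 0 (Real.pi / 2) := ⟨hb0, hblt⟩
          have hM : 0 < 4 * b * Real.tan b := by
            have := aux_tan_pos hbmem; positivity
          have hIoo : Set.Ioo (0:ℝ) (γ / (4 * b * Real.tan b)) ∈ nhdsWithin 0 (Set.Ioi 0) :=
            Ioo_mem_nhdsGT_of_mem ⟨le_refl _, by positivity⟩
          filter_upwards [hIoo] with α hα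
          have hα0 : 0 < α := hα.1
          have hbig : 4 * b * Real.tan b < γ / α := by
            rw [lt_div_iff₀ hα0]
            have := (lt_div_iff₀ hM).1 hα.2
            linarith
          rw [hθeq α hα0] at hbig
          by_contra hc
          push_neg at hc
          have hmem := hθmem α hα0
          rcases eq_or_lt_of_le hc with h | h
          · rw [← h] at hbig; linarith
          · have ht : Real.tan (θ α) ≤ Real.tan b :=
              le_of_lt (Real.tan_lt_tan_of_nonneg_of_lt_pi_div_two (le_of_lt hmem.1) hbmem.2 h)
            have hta := aux_tan_pos hmem
            nlinarith [hmem.1]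
      · intro b hblt
        filter_upwards [self_mem_nhdsWithin] with α hα
        exact lt_trans (hθmem α hα).2 hblt
    have hcont : ContinuousAt (fun x : ℝ => γ * (x * Real.cos x / Real.sin x)) (Real.pi / 2) := by
      apply continuousAt_const.mul
      apply ContinuousAt.div
      · exact continuousAt_id.mul Real.continuous_cos.continuousAt
      · exact Real.continuous_sin.continuousAt
      · simp [Real.sin_pi_div_two]
    have hval : γ * (Real.pi / 2 * Real.cos (Real.pi / 2) / Real.sin (Real.pi / 2)) = 0 := by
      simp
    have hcomp := (hcont.tendsto.comp hto)
    rw [hval] at hcomp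
    apply hcomp.congr'
    filter_upwards [self_mem_nhdsWithin] with α hα
    have hα0 : (0:ℝ) < α := hα
    have hmem := hθmem α hα0
    have hcos := aux_cos_ne hmem
    have hsin : Real.sin (θ α) ≠ 0 :=
      ne_of_gt (Real.sin_pos_of_pos_of_lt_pi hmem.1 (by linarith [Real.pi_pos, hmem.2]))
    simp only [Function.comp_apply]
    rw [key α hα0, Real.tan_eq_sin_div_cos]
    field_simp
  -- limit at ∞
  · have hto : Tendsto θ atTop (nhds 0) := by
      rw [tendsto_order]
      constructor
      · intro b hblt
        filter_upwards [eventually_gt_atTop (0:ℝ)] with α hα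
        exact lt_trans hblt (hθmem α hα).1
      · intro b hblt
        set b' := min b (Real.pi / 4) with hb'
        have hb'mem : b' ∈ Set.Ioo 0 (Real.pi / 2) := by
          constructor
          · exact lt_min hblt (by linarith [Real.pi_pos])
          · exact lt_of_le_of_lt (min_le_right _ _) (by linarith [Real.pi_pos])
        have hM : 0 < 4 * b' * Real.tan b' := by
          have := aux_tan_pos hb'mem; positivity
        filter_upwards [eventually_ge_atTop (γ / (4 * b' * Real.tan b') + 1)] with α hα
        have hα0 : 0 < α := by
          have : 0 < γ / (4 * b' * Real.tan b') := by positivity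
          linarith
        have hsmall : γ / α < 4 * b' * Real.tan b' := by
          rw [div_lt_iff₀ hα0]
          have h1 : γ / (4 * b' * Real.tan b') < α := by linarith
          have := (div_lt_iff₀ hM).1 h1
          nlinarith
        rw [hθeq α hα0] at hsmall
        have hmem := hθmem α hα0
        have hlt : θ α < b' := by
          by_contra hc
          push_neg at hc
          rcases eq_or_lt_of_le hc with h | h
          · rw [h] at hsmall; linarith
          · have ht : Real.tan b' ≤ Real.tan (θ α) :=
              le_of_lt (Real.tan_lt_tan_of_nonneg_of_lt_pi_div_two (le_of_lt hb'mem.1) hmem.2 h)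
            have htb := aux_tan_pos hb'mem
            nlinarith [hb'mem.1]
        exact lt_of_lt_of_le hlt (min_le_left _ _)
    -- tan θα / θα → 1
    have hslope : Tendsto (slope Real.tan 0) (nhdsWithin 0 {(0:ℝ)}ᶜ) (nhds 1) := by
      have hd : HasDerivAt Real.tan 1 0 := by
        have := Real.hasDerivAt_tan (x := 0) (by simp)
        simpa using this
      exact hasDerivAt_iff_tendsto_slope.1 hd
    have hto' : Tendsto θ atTop (nhdsWithin 0 {(0:ℝ)}ᶜ) := by
      rw [tendsto_nhdsWithin_iff]
      refine ⟨hto, ?_⟩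
      filter_upwards [eventually_gt_atTop (0:ℝ)] with α hα
      exact ne_of_gt (hθmem α hα).1
    have h1 : Tendsto (fun α => Real.tan (θ α) / θ α) atTop (nhds 1) := by
      have := hslope.comp hto'
      apply this.congr
      intro α
      simp only [Function.comp_apply, slope_def_field, Real.tan_zero, sub_zero]
    have h2 : Tendsto (fun α => γ * (Real.tan (θ α) / θ α)⁻¹) atTop (nhds (γ * 1⁻¹)) :=
      tendsto_const_nhds.mul (h1.inv₀ one_ne_zero)
    rw [show γ * (1:ℝ)⁻¹ = γ by ring] at h2
    apply h2.congr'
    filter_upwards [eventually_gt_atTop (0:ℝ)] with α hα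
    rw [key α hα, inv_div]
end

section
/- The function ρ(x,y) = (θ*/sin θ*)·cos(2θ*·(1/2 − d(x,y))), where d(x,y) is the geodesic distance on the circle ℝ/ℤ and θ* ∈ (0,π/2), is a probability density on the square [0,1)×[0,1): it is nonnegative and integrates to 1 with respect to Lebesgue measure on [0,1)². -/
open MeasureTheory

lemma cos_affine_int {c : ℝ} (hc : c ≠ 0) (e a b : ℝ) :
    ∫ y in a..b, Real.cos (c*y + e) = (Real.sin (c*b+e) - Real.sin (c*a+e)) / c := by
  rw [intervalIntegral.integral_comp_mul_add Real.cos hc e, integral_cos, smul_eq_mul]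
  ring

lemma g_cont (θ x : ℝ) :
    Continuous (fun y : ℝ => Real.cos (2 * θ * (1/2 - min |x - y| (1 - |x - y|)))) := by
  fun_prop

/-- Inner integral for `x ∈ [0, 1/2]`. -/
lemma key_half (θ : ℝ) (hθ0 : θ ≠ 0) {x : ℝ} (hx0 : 0 ≤ x) (hx : x ≤ 1/2) :
    ∫ y in (0:ℝ)..1, Real.cos (2 * θ * (1/2 - min |x - y| (1 - |x - y|)))
      = Real.sin θ / θ := by
  have hc : (2*θ) ≠ 0 := mul_ne_zero two_ne_zero hθ0
  have hc2 : (-(2*θ)) ≠ 0 := neg_ne_zero.mpr hc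
  set g : ℝ → ℝ := fun y => Real.cos (2 * θ * (1/2 - min |x - y| (1 - |x - y|))) with hg
  have hint : ∀ a b : ℝ, IntervalIntegrable g volume a b :=
    fun a b => (g_cont θ x).intervalIntegrable a b
  have hsplit : ∫ y in (0:ℝ)..1, g y =
      (∫ y in (0:ℝ)..x, g y) + (∫ y in x..(x+1/2), g y) + (∫ y in (x+1/2)..1, g y) := by
    rw [intervalIntegral.integral_add_adjacent_intervals (hint 0 x) (hint x (x+1/2)),
        intervalIntegral.integral_add_adjacent_intervals (hint 0 (x+1/2)) (hint (x+1/2) 1)]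
  have e1 : ∫ y in (0:ℝ)..x, g y
      = ∫ y in (0:ℝ)..x, Real.cos ((2*θ)*y + (θ - 2*θ*x)) := by
    apply intervalIntegral.integral_congr
    intro y hy
    rw [Set.uIcc_of_le hx0] at hy
    obtain ⟨hy0, hyx⟩ := hy
    have habs : |x - y| = x - y := abs_of_nonneg (by linarith)
    have hmin : min |x - y| (1 - |x - y|) = x - y := by
      rw [habs]; exact min_eq_left (by linarith)
    simp only [hg, hmin]
    congr 1; ring
  have e2 : ∫ y in x..(x+1/2), g y
      = ∫ y in x..(x+1/2), Real.cos ((-(2*θ))*y + (θ + 2*θ*x)) := by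
    apply intervalIntegral.integral_congr
    intro y hy
    rw [Set.uIcc_of_le (by linarith : x ≤ x + 1/2)] at hy
    obtain ⟨hy0, hy1⟩ := hy
    have habs : |x - y| = y - x := by rw [abs_sub_comm]; exact abs_of_nonneg (by linarith)
    have hmin : min |x - y| (1 - |x - y|) = y - x := by
      rw [habs]; exact min_eq_left (by linarith)
    simp only [hg, hmin]
    congr 1; ring
  have e3 : ∫ y in (x+1/2)..1, g y
      = ∫ y in (x+1/2)..1, Real.cos ((2*θ)*y + (-θ - 2*θ*x)) := by
    apply intervalIntegral.integral_congr
    intro y hy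
    rw [Set.uIcc_of_le (by linarith : x + 1/2 ≤ 1)] at hy
    obtain ⟨hy0, hy1⟩ := hy
    have habs : |x - y| = y - x := by rw [abs_sub_comm]; exact abs_of_nonneg (by linarith)
    have hmin : min |x - y| (1 - |x - y|) = 1 - (y - x) := by
      rw [habs]; exact min_eq_right (by linarith)
    simp only [hg, hmin]
    congr 1; ring
  have I1 : ∫ y in (0:ℝ)..x, Real.cos ((2*θ)*y + (θ - 2*θ*x))
      = (Real.sin θ - Real.sin (θ - 2*θ*x)) / (2*θ) := by
    rw [cos_affine_int hc, show (2*θ)*x + (θ - 2*θ*x) = θ by ring,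
        show (2*θ)*0 + (θ - 2*θ*x) = θ - 2*θ*x by ring]
  have I2 : ∫ y in x..(x+1/2), Real.cos ((-(2*θ))*y + (θ + 2*θ*x))
      = Real.sin θ / (2*θ) := by
    rw [cos_affine_int hc2, show (-(2*θ))*(x+1/2) + (θ + 2*θ*x) = 0 by ring,
        show (-(2*θ))*x + (θ + 2*θ*x) = θ by ring, Real.sin_zero, zero_sub, neg_div_neg_eq]
  have I3 : ∫ y in (x+1/2)..1, Real.cos ((2*θ)*y + (-θ - 2*θ*x))
      = Real.sin (θ - 2*θ*x) / (2*θ) := by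
    rw [cos_affine_int hc, show (2*θ)*1 + (-θ - 2*θ*x) = θ - 2*θ*x by ring,
        show (2*θ)*(x+1/2) + (-θ - 2*θ*x) = 0 by ring, Real.sin_zero, sub_zero]
  rw [hsplit, e1, e2, e3, I1, I2, I3]
  field_simp
  ring

lemma key (θ : ℝ) (hθ0 : θ ≠ 0) {x : ℝ} (hx0 : 0 ≤ x) (hx1 : x < 1) :
    ∫ y in (0:ℝ)..1, Real.cos (2 * θ * (1/2 - min |x - y| (1 - |x - y|)))
      = Real.sin θ / θ := by
  rcases le_or_gt x (1/2) with h | h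
  · exact key_half θ hθ0 hx0 h
  · have hpt : ∀ y : ℝ, Real.cos (2 * θ * (1/2 - min |x - y| (1 - |x - y|)))
        = (fun y => Real.cos (2 * θ * (1/2 - min |(1-x) - y| (1 - |(1-x) - y|)))) (1 - y) := by
      intro y
      simp only
      rw [show (1-x) - (1-y) = -(x-y) by ring, abs_neg]
    calc ∫ y in (0:ℝ)..1, Real.cos (2 * θ * (1/2 - min |x - y| (1 - |x - y|)))
        = ∫ y in (0:ℝ)..1,
            (fun y => Real.cos (2 * θ * (1/2 - min |(1-x) - y| (1 - |(1-x) - y|)))) (1 - y) := by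
          simp_rw [← hpt]
      _ = ∫ y in (1-1:ℝ)..(1-0:ℝ),
            Real.cos (2 * θ * (1/2 - min |(1-x) - y| (1 - |(1-x) - y|))) :=
          intervalIntegral.integral_comp_sub_left
            (fun y => Real.cos (2 * θ * (1/2 - min |(1-x) - y| (1 - |(1-x) - y|)))) 1
      _ = Real.sin θ / θ := by
          norm_num
          exact key_half θ hθ0 (by linarith) (by linarith)

/-- The function `ρ(x,y) = (θ*/sin θ*) cos(2θ*(1/2 − d(x,y)))`, with
`d(x,y) = min(|x−y|, 1−|x−y|)` the geodesic distance on the circle identified with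
`[0,1)`, and `θ* ∈ (0, π/2)`, is a probability density on `[0,1) × [0,1)`: it is
nonnegative and integrates to `1` with respect to Lebesgue measure. -/
theorem stmt_4 (θ : ℝ) (hθ : θ ∈ Set.Ioo 0 (Real.pi / 2)) :
    (∀ x ∈ Set.Ico (0:ℝ) 1, ∀ y ∈ Set.Ico (0:ℝ) 1,
      0 ≤ (θ / Real.sin θ) * Real.cos (2 * θ * (1/2 - min |x - y| (1 - |x - y|)))) ∧
    (∫ x in Set.Ico (0:ℝ) 1, ∫ y in Set.Ico (0:ℝ) 1,
      (θ / Real.sin θ) * Real.cos (2 * θ * (1/2 - min |x - y| (1 - |x - y|))) = 1) := by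
  obtain ⟨hθ0, hθπ⟩ := hθ
  have hpi := Real.pi_pos
  have hsin : 0 < Real.sin θ := Real.sin_pos_of_pos_of_lt_pi hθ0 (by linarith)
  constructor
  · intro x hx y hy
    obtain ⟨hx0, hx1⟩ := hx
    obtain ⟨hy0, hy1⟩ := hy
    have habs1 : |x - y| < 1 := abs_lt.mpr ⟨by linarith, by linarith⟩
    have hd0 : 0 ≤ min |x - y| (1 - |x - y|) := le_min (abs_nonneg _) (by linarith)
    have hd2 : min |x - y| (1 - |x - y|) ≤ 1/2 := by
      rcases le_total |x - y| (1/2) with h | h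
      · exact le_trans (min_le_left _ _) h
      · exact le_trans (min_le_right _ _) (by linarith)
    apply mul_nonneg (div_nonneg hθ0.le hsin.le)
    apply Real.cos_nonneg_of_mem_Icc
    constructor
    · nlinarith
    · nlinarith
  · have hinner : ∀ x ∈ Set.Ico (0:ℝ) 1,
        ∫ y in Set.Ico (0:ℝ) 1,
          (θ / Real.sin θ) * Real.cos (2 * θ * (1/2 - min |x - y| (1 - |x - y|))) = 1 := by
      intro x hx
      rw [MeasureTheory.integral_Ico_eq_integral_Ioo, ← MeasureTheory.integral_Ioc_eq_integral_Ioo,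
          ← intervalIntegral.integral_of_le zero_le_one,
          intervalIntegral.integral_const_mul, key θ hθ0.ne' hx.1 hx.2]
      field_simp
    rw [setIntegral_congr_fun measurableSet_Ico hinner]
    simp [Real.volume_Ico]
end

section
/- Suppose μ₁ and μ₂ are finite nonnegative Borel measures on the space C* of continuous functions f : 𝕊 → [0,1] not identically 0 or 1, such that for every n, m ≥ 1 and all points x₁,…,xₙ, y₁,…,y_m in 𝕊 one has ∫ (∏ᵢ(1−f(xᵢ)))·(1 − ∏ⱼ(1−f(yⱼ))) dμ₁(f) = ∫ (∏ᵢ(1−f(xᵢ)))·(1 − ∏ⱼ(1−f(yⱼ))) dμ₂(f). Then μ₁ = μ₂. -/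
open MeasureTheory

/-- The state space `C* = C(𝕊;[0,1]) \ {0̄, 1̄}`: continuous functions from the circle
`𝕊 = ℝ/ℤ` to `[0,1]` taking a value strictly between `0` and `1` somewhere, equipped
with the (uniform = compact-open) topology and its Borel σ-algebra. -/
def Cstar : Type :=
  {f : C(AddCircle (1:ℝ), ℝ) // (∀ x, f x ∈ Set.Icc (0:ℝ) 1) ∧ ∃ x, f x ∈ Set.Ioo (0:ℝ) 1}

noncomputable instance : TopologicalSpace Cstar :=
  inferInstanceAs (TopologicalSpace
    {f : C(AddCircle (1:ℝ), ℝ) // (∀ x, f x ∈ Set.Icc (0:ℝ) 1) ∧ ∃ x, f x ∈ Set.Ioo (0:ℝ) 1})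

noncomputable instance : MeasurableSpace Cstar := borel Cstar

/-!
Along a sequence `y₀, y₁, …` visiting every open arc of `𝕊` infinitely often, both
`∏ⱼ (1 - f(yⱼ))` and `∏ⱼ f(yⱼ)` tend to `0` for every `f ∈ C*`, because `f` takes values in
`(0, 1)` on a whole arc. By dominated convergence the first limit turns the hypothesis into
equality of all moments `∫ ∏ᵢ (1 - f(xᵢ))` with `n ≥ 1`. The second gives equality of the
total masses, since `1 - ∏ⱼ f(yⱼ) = 1 - ∏ⱼ (1 - (1 - f(yⱼ)))` is a polynomial without constant
term in the functions `f ↦ 1 - f(y)`. So `μ₁` and `μ₂` integrate every element of the algebra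
generated by these functions alike; this algebra separates the points of the Polish space `C*`,
and such an algebra separates finite Borel measures.
-/

open Filter Topology Set BoundedContinuousFunction

local notation "𝕊" => AddCircle (1:ℝ)

lemma tendsto_prod_range_zero_of_infinite_le {a : ℕ → ℝ} (h0 : ∀ j, 0 ≤ a j)
    (h1 : ∀ j, a j ≤ 1) {δ : ℝ} (hδ : δ < 1) (hS : {j | a j ≤ δ}.Infinite) :
    Tendsto (fun m => ∏ j ∈ Finset.range m, a j) atTop (𝓝 0) := by
  refine tendsto_order.2 ⟨fun b hb => Eventually.of_forall fun m =>
    hb.trans_le (Finset.prod_nonneg fun j _ => h0 j), fun ε hε => ?_⟩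
  obtain ⟨k, hk⟩ := exists_pow_lt_of_lt_one hε hδ
  obtain ⟨t, htS, rfl⟩ := hS.exists_subset_card_eq k
  filter_upwards [eventually_gt_atTop (t.sup id)] with m hm
  have hsub : t ⊆ Finset.range m := fun j hj =>
    Finset.mem_range.2 ((Finset.le_sup (f := id) hj).trans_lt hm)
  calc ∏ j ∈ Finset.range m, a j
      ≤ ∏ j ∈ t, a j :=
        Finset.prod_le_prod_of_subset_of_le_one hsub (fun j _ => h0 j) fun j _ _ => h1 j
    _ ≤ ∏ _j ∈ t, δ := Finset.prod_le_prod (fun j _ => h0 j) fun j hj => htS hj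
    _ = δ ^ t.card := Finset.prod_const δ
    _ < ε := hk

noncomputable def recurrentDenseSeq (X : Type*) [TopologicalSpace X]
    [TopologicalSpace.SeparableSpace X] [Nonempty X] (n : ℕ) : X :=
  TopologicalSpace.denseSeq X n.unpair.1

lemma infinite_setOf_recurrentDenseSeq_mem {X : Type*} [TopologicalSpace X]
    [TopologicalSpace.SeparableSpace X] [Nonempty X] {U : Set X} (hU : IsOpen U)
    (hne : U.Nonempty) : {n | recurrentDenseSeq X n ∈ U}.Infinite := by
  obtain ⟨a, ha⟩ := (TopologicalSpace.denseRange_denseSeq X).exists_mem_open hU hne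
  refine infinite_of_injective_forall_mem (f := Nat.pair a) (fun b b' hb => ?_) fun b => ?_
  · simpa [Nat.pair_eq_pair] using hb
  · simpa [recurrentDenseSeq] using ha

lemma tendsto_prod_recurrentDenseSeq {X : Type*} [TopologicalSpace X]
    [TopologicalSpace.SeparableSpace X] [Nonempty X] {g : X → ℝ} (hg : Continuous g)
    (h0 : ∀ x, 0 ≤ g x) (h1 : ∀ x, g x ≤ 1) {x₀ : X} (hx₀ : g x₀ < 1) :
    Tendsto (fun m => ∏ j ∈ Finset.range m, g (recurrentDenseSeq X j)) atTop (𝓝 0) := by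
  have hδ : (g x₀ + 1) / 2 < 1 := by linarith
  refine tendsto_prod_range_zero_of_infinite_le (fun j => h0 _) (fun j => h1 _) hδ ?_
  refine (infinite_setOf_recurrentDenseSeq_mem (isOpen_Iio.preimage hg) ⟨x₀, ?_⟩).mono
    fun j hj => le_of_lt hj
  show g x₀ < (g x₀ + 1) / 2
  linarith

section IntegralEq

variable {X : Type*} [TopologicalSpace X] [MeasurableSpace X] [OpensMeasurableSpace X]
  (μ ν : Measure X) [IsFiniteMeasure μ] [IsFiniteMeasure ν]

def integralEqSubmodule : Submodule ℝ (X →ᵇ ℝ) where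
  carrier := {g | ∫ x, g x ∂μ = ∫ x, g x ∂ν}
  add_mem' {g g'} (hg : ∫ x, g x ∂μ = _) (hg' : ∫ x, g' x ∂μ = _) := by
    show ∫ x, (g + g') x ∂μ = ∫ x, (g + g') x ∂ν
    simp only [coe_add, Pi.add_apply]
    rw [integral_add (g.integrable μ) (g'.integrable μ),
      integral_add (g.integrable ν) (g'.integrable ν), hg, hg']
  zero_mem' := by simp
  smul_mem' c g (hg : ∫ x, g x ∂μ = _) := by
    show ∫ x, (c • g) x ∂μ = ∫ x, (c • g) x ∂ν
    simp only [coe_smul, smul_eq_mul, integral_const_mul, hg]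

variable {μ ν}

lemma mem_integralEqSubmodule {g : X →ᵇ ℝ} :
    g ∈ integralEqSubmodule μ ν ↔ ∫ x, g x ∂μ = ∫ x, g x ∂ν := Iff.rfl

lemma mem_integralEqSubmodule_of_tendsto {g : ℕ → X →ᵇ ℝ} {G : X →ᵇ ℝ} {C : ℝ}
    (hC : ∀ m x, |g m x| ≤ C)
    (hlim : ∀ x, Tendsto (fun m => g m x) atTop (𝓝 (G x)))
    (hg : ∀ᶠ m in atTop, g m ∈ integralEqSubmodule μ ν) : G ∈ integralEqSubmodule μ ν := by
  have tendsto_integral : ∀ (ρ : Measure X) [IsFiniteMeasure ρ],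
      Tendsto (fun m => ∫ x, g m x ∂ρ) atTop (𝓝 (∫ x, G x ∂ρ)) := fun ρ _ =>
    tendsto_integral_of_dominated_convergence (fun _ => C)
      (fun m => (g m).continuous.aestronglyMeasurable) (integrable_const C)
      (fun m => Eventually.of_forall (hC m)) (Eventually.of_forall hlim)
  exact tendsto_nhds_unique ((tendsto_integral μ).congr' hg) (tendsto_integral ν)

end IntegralEq

lemma NonUnitalSubalgebra.one_sub_prod_one_sub_mem {R A ι : Type*} [CommRing R] [CommRing A]
    [Algebra R A] (N : NonUnitalSubalgebra R A) {s : Finset ι} {a : ι → A}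
    (ha : ∀ i ∈ s, a i ∈ N) : 1 - ∏ i ∈ s, (1 - a i) ∈ N := by
  classical
  induction s using Finset.induction_on with
  | empty => simp [zero_mem]
  | insert i s hi ih =>
    have hs := ih fun j hj => ha j (Finset.mem_insert_of_mem hj)
    have hai := ha i (Finset.mem_insert_self i s)
    rw [Finset.prod_insert hi,
      show 1 - (1 - a i) * ∏ j ∈ s, (1 - a j)
        = (1 - ∏ j ∈ s, (1 - a j)) + a i - a i * (1 - ∏ j ∈ s, (1 - a j)) by ring]
    exact sub_mem (add_mem hs hai) (mul_mem hai hs)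

lemma NonUnitalAlgebra.adjoin_range_le_of_prod_mem {R A ι : Type*} [CommSemiring R]
    [CommSemiring A] [Algebra R A] {e : ι → A} {W : Submodule R A}
    (he : ∀ k, 0 < k → ∀ x : Fin k → ι, ∏ j, e (x j) ∈ W) :
    (NonUnitalAlgebra.adjoin R (range e)).toSubmodule ≤ W := by
  rw [NonUnitalAlgebra.adjoin_eq_span, Submodule.span_le]
  intro g hg
  suffices ∃ k, 0 < k ∧ ∃ x : Fin k → ι, g = ∏ j, e (x j) by
    obtain ⟨k, hk, x, rfl⟩ := this
    exact he k hk x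
  induction hg using Subsemigroup.closure_induction with
  | mem g hg =>
    obtain ⟨i, rfl⟩ := hg
    exact ⟨1, one_pos, fun _ => i, by simp⟩
  | mul g g' _ _ hg hg' =>
    obtain ⟨k, hk, x, rfl⟩ := hg
    obtain ⟨k', -, x', rfl⟩ := hg'
    refine ⟨k + k', by omega, Fin.append x x', ?_⟩
    simp [Fin.prod_univ_add]

lemma Algebra.adjoin_toSubmodule_le_of_one_mem {R A : Type*} [CommSemiring R] [Semiring A]
    [Algebra R A] {s : Set A} {W : Submodule R A} (h1 : 1 ∈ W)
    (hs : (NonUnitalAlgebra.adjoin R s).toSubmodule ≤ W) :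
    Subalgebra.toSubmodule (Algebra.adjoin R s) ≤ W := by
  rw [Algebra.adjoin_eq_span, Submonoid.closure_eq_one_union, Submodule.span_union,
    ← NonUnitalAlgebra.adjoin_eq_span]
  exact sup_le (Submodule.span_le.2 (singleton_subset_iff.2 h1)) hs

instance BoundedContinuousFunction.instTrivialStarReal {X : Type*} [TopologicalSpace X] :
    TrivialStar (X →ᵇ ℝ) :=
  ⟨fun g => by ext; simp⟩

namespace Cstar

instance : BorelSpace Cstar := ⟨rfl⟩

instance : PolishSpace Cstar := by
  let K : Set C(𝕊, ℝ) := ⋂ x, (fun f => f x) ⁻¹' Icc 0 1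
  have hK : IsClosed K := isClosed_iInter fun x => isClosed_Icc.preimage (continuous_eval_const x)
  have := hK.polishSpace
  let U : Set K := ⋃ x, (fun f => f.1 x) ⁻¹' Ioo 0 1
  have hU : IsOpen U := isOpen_iUnion fun x =>
    isOpen_Ioo.preimage ((continuous_eval_const x).comp continuous_subtype_val)
  have := hU.polishSpace
  let toU : Cstar ≃ₜ U :=
    { toFun f := ⟨⟨f.1, mem_iInter.2 f.2.1⟩, mem_iUnion.2 f.2.2⟩
      invFun f := ⟨f.1.1, mem_iInter.1 f.1.2, mem_iUnion.1 f.2⟩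
      continuous_toFun := by fun_prop
      continuous_invFun := by fun_prop }
  exact toU.isClosedEmbedding.polishSpace

lemma one_sub_apply_mem_unitInterval (f : Cstar) (x : 𝕊) : 1 - f.1 x ∈ unitInterval :=
  ⟨sub_nonneg.2 (f.2.1 x).2, sub_le_self _ (f.2.1 x).1⟩

noncomputable def oneSubEval (x : 𝕊) : Cstar →ᵇ ℝ :=
  .mkOfBound ⟨fun f => 1 - f.1 x,
      continuous_const.sub ((continuous_eval_const x).comp continuous_subtype_val)⟩ 1
    fun f g => Real.dist_le_of_mem_Icc_01 (one_sub_apply_mem_unitInterval f x)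
      (one_sub_apply_mem_unitInterval g x)

@[simp]
lemma oneSubEval_apply (x : 𝕊) (f : Cstar) : oneSubEval x f = 1 - f.1 x := rfl

lemma tendsto_prod_apply_recurrentDenseSeq (f : Cstar) :
    Tendsto (fun m => ∏ j ∈ Finset.range m, f.1 (recurrentDenseSeq 𝕊 j)) atTop (𝓝 0) := by
  obtain ⟨x₀, hx₀⟩ := f.2.2
  exact tendsto_prod_recurrentDenseSeq f.1.continuous (fun x => (f.2.1 x).1)
    (fun x => (f.2.1 x).2) hx₀.2

lemma tendsto_prod_one_sub_apply_recurrentDenseSeq (f : Cstar) :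
    Tendsto (fun m => ∏ j ∈ Finset.range m, (1 - f.1 (recurrentDenseSeq 𝕊 j))) atTop (𝓝 0) := by
  obtain ⟨x₀, hx₀⟩ := f.2.2
  exact tendsto_prod_recurrentDenseSeq (continuous_const.sub f.1.continuous)
    (fun x => (one_sub_apply_mem_unitInterval f x).1)
    (fun x => (one_sub_apply_mem_unitInterval f x).2) (x₀ := x₀) (sub_lt_self 1 hx₀.1)

variable {μ₁ μ₂ : Measure Cstar} [IsFiniteMeasure μ₁] [IsFiniteMeasure μ₂]

lemma prod_oneSubEval_mem_integralEqSubmodule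
    (h : ∀ (n m : ℕ), 0 < n → 0 < m →
      ∀ (x : Fin n → AddCircle (1:ℝ)) (y : Fin m → AddCircle (1:ℝ)),
      (∫ f : Cstar, (∏ i, (1 - f.1 (x i))) * (1 - ∏ j, (1 - f.1 (y j))) ∂μ₁)
        = ∫ f : Cstar, (∏ i, (1 - f.1 (x i))) * (1 - ∏ j, (1 - f.1 (y j))) ∂μ₂)
    {k : ℕ} (hk : 0 < k) (x : Fin k → 𝕊) :
    ∏ i, oneSubEval (x i) ∈ integralEqSubmodule μ₁ μ₂ := by
  let v := recurrentDenseSeq 𝕊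
  have hprod : ∀ (m : ℕ) (f : Cstar),
      ∏ j : Fin m, (1 - f.1 (v j)) = ∏ j ∈ Finset.range m, (1 - f.1 (v j)) := fun m f =>
    Fin.prod_univ_eq_prod_range (fun j => 1 - f.1 (v j)) m
  refine mem_integralEqSubmodule_of_tendsto
    (g := fun m => (∏ i, oneSubEval (x i)) * (1 - ∏ j : Fin m, oneSubEval (v j))) (C := 1)
    (fun m f => ?_) (fun f => ?_) ?_
  · have hP := unitInterval.prod_mem fun i (_ : i ∈ Finset.univ) =>
      one_sub_apply_mem_unitInterval f (x i)
    have hQ := unitInterval.prod_mem fun (j : Fin m) (_ : j ∈ Finset.univ) =>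
      one_sub_apply_mem_unitInterval f (v j)
    have hPQ := unitInterval.mul_mem hP (Icc.mem_iff_one_sub_mem.mp hQ)
    simp only [coe_mul, coe_prod, coe_sub, coe_one, Pi.mul_apply, Finset.prod_apply,
      oneSubEval_apply, Pi.sub_apply, Pi.one_apply]
    exact abs_le.2 ⟨by linarith [hPQ.1], hPQ.2⟩
  · simpa [hprod] using ((tendsto_prod_one_sub_apply_recurrentDenseSeq f).const_sub 1).const_mul
      (∏ i, (1 - f.1 (x i)))
  · filter_upwards [eventually_gt_atTop 0] with m hm
    simpa [mem_integralEqSubmodule] using h k m hk hm x (fun j => v j)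

lemma one_mem_integralEqSubmodule
    (hN : (NonUnitalAlgebra.adjoin ℝ (range oneSubEval)).toSubmodule
      ≤ integralEqSubmodule μ₁ μ₂) :
    1 ∈ integralEqSubmodule μ₁ μ₂ := by
  let v := recurrentDenseSeq 𝕊
  refine mem_integralEqSubmodule_of_tendsto
    (g := fun m => 1 - ∏ j ∈ Finset.range m, (1 - oneSubEval (v j))) (C := 1)
    (fun m f => ?_) (fun f => ?_) (Eventually.of_forall fun m => hN ?_)
  · have hP := Icc.mem_iff_one_sub_mem.mp <|
      unitInterval.prod_mem fun j (_ : j ∈ Finset.range m) => f.2.1 (v j)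
    simp only [coe_sub, coe_one, coe_prod, Pi.sub_apply, Pi.one_apply, Finset.prod_apply,
      oneSubEval_apply, sub_sub_cancel]
    exact abs_le.2 ⟨by linarith [hP.1], hP.2⟩
  · simpa using (tendsto_prod_apply_recurrentDenseSeq f).const_sub 1
  · exact NonUnitalSubalgebra.one_sub_prod_one_sub_mem _ fun j _ =>
      NonUnitalAlgebra.subset_adjoin ℝ ⟨v j, rfl⟩

lemma separatesPoints_starAlgebraAdjoin_oneSubEval :
    ((StarAlgebra.adjoin ℝ (range oneSubEval)).map (toContinuousMapStarₐ ℝ)).SeparatesPoints := by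
  intro f f' hff'
  obtain ⟨x, hx⟩ : ∃ x, f.1 x ≠ f'.1 x := by
    by_contra! hall
    exact hff' (Subtype.ext (ContinuousMap.ext hall))
  refine ⟨_, mem_image_of_mem _ (StarSubalgebra.mem_map.2
    ⟨oneSubEval x, StarAlgebra.subset_adjoin ℝ _ ⟨x, rfl⟩, rfl⟩), ?_⟩
  simpa using hx

end Cstar

/-- If two finite nonnegative Borel measures `μ₁, μ₂` on `C*` give the same integral to
every "duality moment" `f ↦ (∏ᵢ (1−f(xᵢ)))·(1 − ∏ⱼ (1−f(yⱼ)))`, for all `n, m ≥ 1` and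
all points `x₁,…,xₙ, y₁,…,y_m` of the circle, then `μ₁ = μ₂`. -/
theorem stmt_7 (μ₁ μ₂ : Measure Cstar) [IsFiniteMeasure μ₁] [IsFiniteMeasure μ₂]
    (h : ∀ (n m : ℕ), 0 < n → 0 < m →
      ∀ (x : Fin n → AddCircle (1:ℝ)) (y : Fin m → AddCircle (1:ℝ)),
      (∫ f : Cstar, (∏ i, (1 - f.1 (x i))) * (1 - ∏ j, (1 - f.1 (y j))) ∂μ₁)
        = ∫ f : Cstar, (∏ i, (1 - f.1 (x i))) * (1 - ∏ j, (1 - f.1 (y j))) ∂μ₂) :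
    μ₁ = μ₂ := by
  have hN := NonUnitalAlgebra.adjoin_range_le_of_prod_mem fun _ hk x =>
    Cstar.prod_oneSubEval_mem_integralEqSubmodule h hk x
  have hA := Algebra.adjoin_toSubmodule_le_of_one_mem (Cstar.one_mem_integralEqSubmodule hN) hN
  refine ext_of_forall_mem_subalgebra_integral_eq_of_polish
    Cstar.separatesPoints_starAlgebraAdjoin_oneSubEval fun g hg => hA ?_
  rwa [← StarSubalgebra.mem_toSubalgebra, StarAlgebra.adjoin_toSubalgebra, star_trivial,
    union_self] at hg
end

section
/- The family of functions {f ↦ E(f, z) : z ∈ χ}, where E(f, ((x₁,…,xₙ),(y₁,…,y_m))) = (∏ᵢ(1−f(xᵢ)))·(1 − ∏ⱼ(1−f(yⱼ))), separates points of C*: for any two distinct f, g in C*, there exists z ∈ χ with E(f,z) ≠ E(g,z). In fact one may take z = ((x),(x)) or z = ((x,x),(x)) for a suitable x ∈ 𝕊. -/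
/-- The family of duality functions `f ↦ E(f,z)`,
`E(f, ((x₁,…,xₙ),(y₁,…,y_m))) = (∏ᵢ (1−f(xᵢ)))·(1 − ∏ⱼ (1−f(yⱼ)))`, separates points of
`C*`: for distinct `f, g ∈ C*` there is `z ∈ χ` with `E(f,z) ≠ E(g,z)`.  In fact one may
take `z = ((x),(x))` (giving `E(f,z) = (1−f(x))·f(x)`) or `z = ((x,x),(x))` (giving
`E(f,z) = (1−f(x))²·f(x)`) for a suitable point `x` of the circle. -/
theorem stmt_8 (f g : Cstar) (hfg : f ≠ g) :
    ∃ x : AddCircle (1:ℝ),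
      (1 - f.1 x) * f.1 x ≠ (1 - g.1 x) * g.1 x ∨
      (1 - f.1 x) ^ 2 * f.1 x ≠ (1 - g.1 x) ^ 2 * g.1 x := by
  by_contra hcon
  push_neg at hcon
  -- pointwise: the difference is in {-1,0,1}
  have key : ∀ x : AddCircle (1:ℝ), g.1 x - f.1 x = -1 ∨ g.1 x - f.1 x = 0 ∨ g.1 x - f.1 x = 1 := by
    intro x
    obtain ⟨h1, h2⟩ := hcon x
    set u := f.1 x with hu
    set v := g.1 x with hv
    have hcase : (u - v) * (1 - u - v) = 0 := by ring_nf; nlinarith [h1]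
    rcases mul_eq_zero.1 hcase with h | h
    · right; left; linarith
    · -- u + v = 1
      have h3 : u * (1 - u) * (1 - 2*u) = 0 := by nlinarith [h2]
      rcases mul_eq_zero.1 h3 with h4 | h4
      · rcases mul_eq_zero.1 h4 with h5 | h5
        · right; right; linarith
        · left; linarith
      · right; left; linarith
  -- at the interior point, difference is 0
  obtain ⟨x₀, hx₀⟩ := f.2.2
  have hbf := f.2.1
  have hbg := g.2.1
  have hd0 : g.1 x₀ - f.1 x₀ = 0 := by
    rcases key x₀ with h | h | h
    · exfalso; have := (hbg x₀).1; have := hx₀.2; linarith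
    · exact h
    · exfalso; have := (hbg x₀).2; have := hx₀.1; linarith
  -- f ≠ g pointwise somewhere
  have hne : f.1 ≠ g.1 := fun h => hfg (Subtype.ext h)
  obtain ⟨x₁, hx₁⟩ : ∃ x, f.1 x ≠ g.1 x := by
    by_contra h; push_neg at h; exact hne (ContinuousMap.ext h)
  have hcont : Continuous fun x => g.1 x - f.1 x := (map_continuous g.1).sub (map_continuous f.1)
  rcases key x₁ with h | h | h
  · -- d x₁ = -1, d x₀ = 0 : IVT gives value -1/2
    have := intermediate_value_univ (f := fun x => g.1 x - f.1 x) x₁ x₀ hcont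
    have hmem : (-(1:ℝ)/2) ∈ Set.Icc ((fun x => g.1 x - f.1 x) x₁) ((fun x => g.1 x - f.1 x) x₀) := by
      simp only [h, hd0]; norm_num
    obtain ⟨x₂, hx₂⟩ := this hmem
    have hx₂' : g.1 x₂ - f.1 x₂ = -1/2 := hx₂
    rcases key x₂ with h' | h' | h' <;> linarith
  · exact hx₁ (by linarith)
  · have := intermediate_value_univ (f := fun x => g.1 x - f.1 x) x₀ x₁ hcont
    have hmem : ((1:ℝ)/2) ∈ Set.Icc ((fun x => g.1 x - f.1 x) x₀) ((fun x => g.1 x - f.1 x) x₁) := by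
      simp only [h, hd0]; norm_num
    obtain ⟨x₂, hx₂⟩ := this hmem
    have hx₂' : g.1 x₂ - f.1 x₂ = 1/2 := hx₂
    rcases key x₂ with h' | h' | h' <;> linarith
end

section
/- Suppose (μ₁⁽ⁿ⁾) and (μ₂⁽ⁿ⁾) are sequences of Borel probability measures on a Polish space Ξ equipped with a closed partial order (i.e. F = {(x,y) : x ≤ y} is closed in Ξ×Ξ), converging weakly to μ₁ and μ₂ respectively, and for each n there exists a coupling of μ₁⁽ⁿ⁾ and μ₂⁽ⁿ⁾ supported on F. Then there exists a coupling of μ₁ and μ₂ supported on F; i.e. stochastic dominance is preserved under weak limits. -/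
/-!
The couplings of `μ₁⁽ⁿ⁾` and `μ₂⁽ⁿ⁾` form a tight family, because both families of marginals
converge and are therefore tight. By Prokhorov's theorem they have a cluster point `ν` for weak
convergence. Pushing forward along the projections is weakly continuous, so the marginals of `ν`
are the limits `μ₁` and `μ₂`; and `ν F ≥ limsup ν⁽ⁿ⁾ F = 1` by the portmanteau theorem, `F` being
closed.
-/

open MeasureTheory Filter Set Topology

namespace MeasureTheory

variable {X Y ι : Type*} [MeasurableSpace X]

lemma isTightMeasureSet_range_of_tendsto [PseudoMetricSpace X] [SecondCountableTopology X]
    [CompleteSpace X] [BorelSpace X] {μs : ℕ → ProbabilityMeasure X}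
    {μ : ProbabilityMeasure X} (h : Tendsto μs atTop (𝓝 μ)) :
    IsTightMeasureSet (range fun n ↦ (μs n : Measure X)) := by
  have hK : IsCompact (insert μ (range μs)) := h.isCompact_insert_range
  have hcl : IsCompact (closure (range μs)) :=
    hK.of_isClosed_subset isClosed_closure (closure_minimal (subset_insert _ _) hK.isClosed)
  convert isTightMeasureSet_of_isCompact_closure hcl using 1
  ext
  simp

lemma isTightMeasureSet_range_of_fst_of_snd [TopologicalSpace X] [MeasurableSpace Y]
    [TopologicalSpace Y] {ν : ι → Measure (X × Y)} {μ₁ : ι → Measure X} {μ₂ : ι → Measure Y}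
    (h₁ : ∀ i, (ν i).fst = μ₁ i) (h₂ : ∀ i, (ν i).snd = μ₂ i)
    (ht₁ : IsTightMeasureSet (range μ₁)) (ht₂ : IsTightMeasureSet (range μ₂)) :
    IsTightMeasureSet (range ν) := by
  refine IsTightMeasureSet.prodMk ?_ ?_
  · rwa [← range_comp, show Measure.fst ∘ ν = μ₁ from funext h₁]
  · rwa [← range_comp, show Measure.snd ∘ ν = μ₂ from funext h₂]

namespace ProbabilityMeasure

lemma exists_mapClusterPt_of_isTightMeasureSet [TopologicalSpace X] [T2Space X] [BorelSpace X]
    {νs : ι → ProbabilityMeasure X} (h : IsTightMeasureSet (range fun i ↦ (νs i : Measure X)))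
    (L : Filter ι) [L.NeBot] : ∃ ν, MapClusterPt ν L νs := by
  have hcl : IsCompact (closure (range νs)) := by
    refine isCompact_closure_of_isTightMeasureSet ?_
    convert h using 1
    ext
    simp
  obtain ⟨ν, -, hν⟩ := hcl.exists_mapClusterPt (f := L)
    (tendsto_principal.2 (.of_forall fun i ↦ subset_closure (mem_range_self i)))
  exact ⟨ν, hν⟩

variable [TopologicalSpace X] [OpensMeasurableSpace X] {L : Filter ι}
  {νs : ι → ProbabilityMeasure X} {ν : ProbabilityMeasure X}

lemma measure_eq_one_of_tendsto [HasOuterApproxClosed X] [L.NeBot] (hν : Tendsto νs L (𝓝 ν))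
    {F : Set X} (hF : IsClosed F) (hνsF : ∀ i, (νs i : Measure X) F = 1) :
    (ν : Measure X) F = 1 := by
  refine le_antisymm prob_le_one ?_
  calc (1 : ENNReal) = L.limsup fun i ↦ (νs i : Measure X) F := by simp [hνsF]
    _ ≤ (ν : Measure X) F := limsup_measure_closed_le_of_tendsto hν hF

lemma map_eq_of_tendsto [L.NeBot] [TopologicalSpace Y] [HasOuterApproxClosed Y]
    [MeasurableSpace Y] [BorelSpace Y] {f : X → Y} (hf : Continuous f)
    (hν : Tendsto νs L (𝓝 ν)) {μs : ι → ProbabilityMeasure Y} {μ : ProbabilityMeasure Y}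
    (hμ : Tendsto μs L (𝓝 μ)) (hmap : ∀ i, (νs i : Measure X).map f = μs i) :
    (ν : Measure X).map f = μ := by
  have hmap' : (fun i ↦ (νs i).map hf.measurable.aemeasurable) = μs :=
    funext fun i ↦ toMeasure_injective (by simpa using hmap i)
  have hlim := ((continuous_map hf).tendsto ν).comp hν
  rw [Function.comp_def, hmap'] at hlim
  simpa using congrArg toMeasure (tendsto_nhds_unique hlim hμ)

end ProbabilityMeasure

end MeasureTheory

/-- Stochastic dominance is preserved under weak limits: if `Ξ` is Polish with a closed
relation `F ⊆ Ξ × Ξ` (e.g. the graph of a closed partial order), `μ₁⁽ⁿ⁾ → μ₁` and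
`μ₂⁽ⁿ⁾ → μ₂` weakly, and each pair `(μ₁⁽ⁿ⁾, μ₂⁽ⁿ⁾)` admits a coupling supported on `F`,
then `μ₁` and `μ₂` admit a coupling supported on `F`. -/
theorem stmt_15 {Ξ : Type*} [MetricSpace Ξ] [TopologicalSpace.SeparableSpace Ξ] [CompleteSpace Ξ]
    [MeasurableSpace Ξ] [BorelSpace Ξ]
    (F : Set (Ξ × Ξ)) (hF : IsClosed F)
    (μ₁ μ₂ : ProbabilityMeasure Ξ) (μ₁n μ₂n : ℕ → ProbabilityMeasure Ξ)
    (h₁ : Tendsto μ₁n atTop (nhds μ₁)) (h₂ : Tendsto μ₂n atTop (nhds μ₂))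
    (hc : ∀ n : ℕ, ∃ ν : ProbabilityMeasure (Ξ × Ξ),
      (ν : Measure (Ξ × Ξ)).map Prod.fst = (μ₁n n : Measure Ξ) ∧
      (ν : Measure (Ξ × Ξ)).map Prod.snd = (μ₂n n : Measure Ξ) ∧
      (ν : Measure (Ξ × Ξ)) F = 1) :
    ∃ ν : ProbabilityMeasure (Ξ × Ξ),
      (ν : Measure (Ξ × Ξ)).map Prod.fst = (μ₁ : Measure Ξ) ∧
      (ν : Measure (Ξ × Ξ)).map Prod.snd = (μ₂ : Measure Ξ) ∧
      (ν : Measure (Ξ × Ξ)) F = 1 := by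
  choose νs hν₁ hν₂ hνF using hc
  have htight : IsTightMeasureSet (range fun n ↦ (νs n : Measure (Ξ × Ξ))) :=
    isTightMeasureSet_range_of_fst_of_snd hν₁ hν₂
      (isTightMeasureSet_range_of_tendsto h₁) (isTightMeasureSet_range_of_tendsto h₂)
  obtain ⟨ν, hν⟩ := ProbabilityMeasure.exists_mapClusterPt_of_isTightMeasureSet htight atTop
  obtain ⟨U, hU, hνU⟩ := mapClusterPt_iff_ultrafilter.1 hν
  exact ⟨ν, ProbabilityMeasure.map_eq_of_tendsto continuous_fst hνU (h₁.mono_left hU) hν₁,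
    ProbabilityMeasure.map_eq_of_tendsto continuous_snd hνU (h₂.mono_left hU) hν₂,
    ProbabilityMeasure.measure_eq_one_of_tendsto hνU hF hνF⟩
end
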